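/- Weak Deduction Theorem for FR_[→]: for all formulas A, B of the implicational language, {A} ⊢_{FR_[→]} B if and only if ⊢_{FR_[→]} A→B. -/
import Mathlib


/-- Implicational formulas: built from propositional variables using only `→`. -/
inductive Fm : Type
  | var : ℕ → Fm
  | imp : Fm → Fm → Fm

/-- `chain [A₁,…,Aₙ] E` is the formula `A₁→(A₂→(⋯→(Aₙ→E)⋯))` (and `E` when n = 0). -/
def chain : List Fm → Fm → Fm
  | [], E => E
  | A :: L, E => Fm.imp A (chain L E)

/-- Theorems of the Hilbert system `FR_[→]`: `F_[→]` extended with the rule `I_Refl`. -/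
inductive FRThm : Fm → Prop
  | id (A : Fm) : FRThm (A.imp A)
  | mp {A B : Fm} : FRThm A → FRThm (A.imp B) → FRThm B
  | afort {A : Fm} (B : Fm) : FRThm A → FRThm (B.imp A)
  | rule4 {L : List Fm} {B C D : Fm} :
      FRThm (chain L (B.imp C)) → FRThm (chain L (C.imp D)) →
      FRThm (chain L (B.imp D))
  | irefl {L : List Fm} {B C : Fm} :
      FRThm (chain L B) → FRThm (chain L (B.imp C)) → FRThm (chain L C)

/-- Derivations from assumptions in `FR_[→]`: members of `Γ` and theorems may be used;
rules (3) and (4) only apply to theorems; `I_Refl` is unrestricted (its case `n = 0`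
gives unrestricted modus ponens). -/
inductive FRDeriv (Γ : Set Fm) : Fm → Prop
  | hyp {A : Fm} : A ∈ Γ → FRDeriv Γ A
  | thm {A : Fm} : FRThm A → FRDeriv Γ A
  | irefl {L : List Fm} {B C : Fm} :
      FRDeriv Γ (chain L B) → FRDeriv Γ (chain L (B.imp C)) → FRDeriv Γ (chain L C)

/-- Weak Deduction Theorem for `FR_[→]`: `{A} ⊢ B` iff `⊢ A → B`. -/
theorem weak_deduction_FR (A B : Fm) :
    FRDeriv ({A} : Set Fm) B ↔ FRThm (A.imp B) := by
  constructor
  · intro h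
    induction h with
    | hyp hA => rw [Set.mem_singleton_iff] at hA; subst hA; exact FRThm.id _
    | thm ht => exact FRThm.afort _ ht
    | @irefl L B C _ _ ih1 ih2 =>
        exact FRThm.irefl (L := A :: L) ih1 ih2
  · intro h
    exact FRDeriv.irefl (L := []) (FRDeriv.hyp rfl) (FRDeriv.thm h)
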